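/- arXiv:1809.03070 — 2 statements merged into one kernel-verified Lean document; each statement's English description precedes it below -/
import Mathlib

section
/- Suppose s₁, s₂, s₃, s₄ : I → ℝ are differentiable on the interval I and trace rectangles gracing γ. Then A is differentiable on I and A′(t) = Y(t) X′(t) − X(t) Y′(t) for every t ∈ I. -/
/-
Let `F` be a primitive of `det(γ, γ′)`. Then `A_j = ½(F(s_{j+1}) − F(s_j)) + ½ det(p_{j+1}, p_j)`
has derivative `½ det(p_{j+1} − p_j, p_j′ + p_{j+1}′)`, where `p_j′ = s_j′ γ′(s_j)` are the vertex
velocities (periodicity of `γ` and `γ′` takes care of `p₅ = p₁`). For a parallelogram with sides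
`u = p₂ − p₁` and `w = p₄ − p₁` the alternating sum of these derivatives collapses to
`det(u′, w) − det(u, w′)`. For a positively oriented rectangle `w` is `u` rotated by a quarter
turn and scaled by `Y / X`, which turns this into `Y ⟨u, u′⟩ / X − X ⟨w, w′⟩ / Y = Y X′ − X Y′`.
-/

noncomputable section

def pdet (u v : EuclideanSpace ℝ (Fin 2)) : ℝ := u 0 * v 1 - u 1 * v 0

open scoped RealInnerProductSpace

local notation "ℝ²" => EuclideanSpace ℝ (Fin 2)

theorem inner_eq_fin_two (u v : ℝ²) : ⟪u, v⟫ = u 0 * v 0 + u 1 * v 1 := by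
  simp [PiLp.inner_apply, Fin.sum_univ_two, mul_comm]

theorem norm_sq_eq_fin_two (u : ℝ²) : ‖u‖ ^ 2 = u 0 ^ 2 + u 1 ^ 2 := by
  simp [EuclideanSpace.real_norm_sq_eq, Fin.sum_univ_two]

theorem Continuous.pdet {p q : ℝ → ℝ²} (hp : Continuous p) (hq : Continuous q) :
    Continuous fun s => pdet (p s) (q s) := by
  unfold _root_.pdet; fun_prop

theorem HasDerivWithinAt.pdet {p q : ℝ → ℝ²} {p' q' : ℝ²} {s : Set ℝ} {t : ℝ}
    (hp : HasDerivWithinAt p p' s t) (hq : HasDerivWithinAt q q' s t) :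
    HasDerivWithinAt (fun τ => pdet (p τ) (q τ)) (pdet p' (q t) + pdet (p t) q') s t := by
  have coord {f : ℝ → ℝ²} {f' : ℝ²} (hf : HasDerivWithinAt f f' s t) (i : Fin 2) :
      HasDerivWithinAt (fun τ => f τ i) (f' i) s t :=
    (EuclideanSpace.proj (𝕜 := ℝ) (ι := Fin 2) i).hasFDerivAt.comp_hasDerivWithinAt t hf
  exact ((coord hp 0).mul (coord hq 1)).sub ((coord hp 1).mul (coord hq 0)) |>.congr_deriv
    (by simp only [_root_.pdet]; ring)

theorem HasDerivWithinAt.norm {F : Type*} [NormedAddCommGroup F] [InnerProductSpace ℝ F]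
    {f : ℝ → F} {f' : F} {s : Set ℝ} {t : ℝ} (hf : HasDerivWithinAt f f' s t) (h0 : f t ≠ 0) :
    HasDerivWithinAt (fun τ => ‖f τ‖) (⟪f t, f'⟫ / ‖f t‖) s t := by
  have hpos : 0 < ‖f t‖ := norm_pos_iff.2 h0
  convert hf.norm_sq.sqrt (pow_pos hpos 2).ne' using 1
  · simp only [Real.sqrt_sq (norm_nonneg _)]
  · rw [Real.sqrt_sq hpos.le]
    field_simp

theorem hasDerivWithinAt_intervalIntegral {f : ℝ → ℝ} (hf : Continuous f) {a b : ℝ → ℝ}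
    {a' b' : ℝ} {s : Set ℝ} {t : ℝ} (ha : HasDerivWithinAt a a' s t)
    (hb : HasDerivWithinAt b b' s t) :
    HasDerivWithinAt (fun τ => ∫ x in a τ..b τ, f x) (f (b t) * b' - f (a t) * a') s t := by
  have hF (y : ℝ) : HasDerivAt (fun u => ∫ x in (0 : ℝ)..u, f x) (f y) y :=
    (hf.integral_hasStrictDerivAt 0 y).hasDerivAt
  have hsplit : (fun τ => ∫ x in a τ..b τ, f x)
      = fun τ => (∫ x in (0 : ℝ)..b τ, f x) - ∫ x in (0 : ℝ)..a τ, f x := by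
    ext τ
    exact (intervalIntegral.integral_interval_sub_left
      (hf.intervalIntegrable _ _) (hf.intervalIntegrable _ _)).symm
  rw [hsplit]
  exact ((hF (b t)).comp_hasDerivWithinAt t hb).sub ((hF (a t)).comp_hasDerivWithinAt t ha)

theorem Function.Periodic.deriv {F : Type*} [NormedAddCommGroup F] [NormedSpace ℝ F]
    {f : ℝ → F} {c : ℝ} (hf : Function.Periodic f c) : Function.Periodic (deriv f) c :=
  fun x => by rw [← deriv_comp_add_const, funext hf]

theorem ContDiff.hasDerivWithinAt_comp {F : Type*} [NormedAddCommGroup F] [NormedSpace ℝ F]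
    {γ : ℝ → F} (hγ : ContDiff ℝ 1 γ) {c : ℝ → ℝ} {c' : ℝ} {s : Set ℝ} {t : ℝ}
    (hc : HasDerivWithinAt c c' s t) :
    HasDerivWithinAt (fun τ => γ (c τ)) (c' • deriv γ (c t)) s t :=
  (hγ.differentiable one_ne_zero (c t)).hasDerivAt.scomp_hasDerivWithinAt t hc

-- In the paper's notation `A_j(t) = arcArea γ (s_j t) (s_{j+1} t)`.
def arcArea (γ : ℝ → ℝ²) (a b : ℝ) : ℝ :=
  (1/2) * (∫ s in a..b, pdet (γ s) (deriv γ s)) + (1/2) * pdet (γ b) (γ a)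

theorem hasDerivWithinAt_arcArea {γ : ℝ → ℝ²} (hγ : ContDiff ℝ 1 γ) {a b : ℝ → ℝ}
    {a' b' : ℝ} {s : Set ℝ} {t : ℝ} (ha : HasDerivWithinAt a a' s t)
    (hb : HasDerivWithinAt b b' s t) :
    HasDerivWithinAt (fun τ => arcArea γ (a τ) (b τ))
      ((1/2) * pdet (γ (b t) - γ (a t)) (a' • deriv γ (a t) + b' • deriv γ (b t))) s t := by
  have hint := hasDerivWithinAt_intervalIntegral
    (hγ.continuous.pdet (hγ.continuous_deriv le_rfl)) ha hb
  refine ((hint.const_mul (1/2)).add (((hγ.hasDerivWithinAt_comp hb).pdet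
    (hγ.hasDerivWithinAt_comp ha)).const_mul (1/2))).congr_deriv ?_
  simp only [pdet, PiLp.add_apply, PiLp.sub_apply, PiLp.smul_apply, smul_eq_mul]
  ring

theorem hasDerivWithinAt_inscribedArea {γ : ℝ → ℝ²} (hγ : ContDiff ℝ 1 γ)
    (hper : Function.Periodic γ 1) {s₁ s₂ s₃ s₄ : ℝ → ℝ} {s₁' s₂' s₃' s₄' : ℝ} {I : Set ℝ}
    {t : ℝ} (h₁ : HasDerivWithinAt s₁ s₁' I t) (h₂ : HasDerivWithinAt s₂ s₂' I t)
    (h₃ : HasDerivWithinAt s₃ s₃' I t) (h₄ : HasDerivWithinAt s₄ s₄' I t) :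
    HasDerivWithinAt
      (fun τ => (arcArea γ (s₁ τ) (s₂ τ) + arcArea γ (s₃ τ) (s₄ τ))
        - (arcArea γ (s₂ τ) (s₃ τ) + arcArea γ (s₄ τ) (s₁ τ + 1)))
      (((1/2) * pdet (γ (s₂ t) - γ (s₁ t)) (s₁' • deriv γ (s₁ t) + s₂' • deriv γ (s₂ t))
        + (1/2) * pdet (γ (s₄ t) - γ (s₃ t)) (s₃' • deriv γ (s₃ t) + s₄' • deriv γ (s₄ t)))
      - ((1/2) * pdet (γ (s₃ t) - γ (s₂ t)) (s₂' • deriv γ (s₂ t) + s₃' • deriv γ (s₃ t))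
        + (1/2) * pdet (γ (s₁ t) - γ (s₄ t)) (s₄' • deriv γ (s₄ t) + s₁' • deriv γ (s₁ t))))
      I t := by
  have h₄₁ := hasDerivWithinAt_arcArea hγ h₄ (h₁.add_const 1)
  rw [hper (s₁ t), hper.deriv (s₁ t)] at h₄₁
  exact ((hasDerivWithinAt_arcArea hγ h₁ h₂).add (hasDerivWithinAt_arcArea hγ h₃ h₄)).sub
    ((hasDerivWithinAt_arcArea hγ h₂ h₃).add h₄₁)

theorem alternating_pdet_sum_eq_of_parallelogram {p₁ p₂ p₃ p₄ v₁ v₂ v₃ v₄ : ℝ²}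
    (hp : p₁ + p₃ = p₂ + p₄) (hv : v₁ + v₃ = v₂ + v₄) :
    ((1/2) * pdet (p₂ - p₁) (v₁ + v₂) + (1/2) * pdet (p₄ - p₃) (v₃ + v₄))
      - ((1/2) * pdet (p₃ - p₂) (v₂ + v₃) + (1/2) * pdet (p₁ - p₄) (v₄ + v₁))
      = pdet (v₂ - v₁) (p₄ - p₁) - pdet (p₂ - p₁) (v₄ - v₁) := by
  obtain rfl : p₃ = p₂ + p₄ - p₁ := by rw [← hp]; abel
  obtain rfl : v₃ = v₂ + v₄ - v₁ := by rw [← hv]; abel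
  simp only [pdet, PiLp.add_apply, PiLp.sub_apply]
  ring

theorem ne_zero_of_pdet_pos {u w : ℝ²} (h : 0 < pdet u w) : u ≠ 0 ∧ w ≠ 0 := by
  constructor <;> rintro rfl <;> simp [pdet] at h

theorem pdet_eq_norm_mul_norm {u w : ℝ²} (hperp : ⟪u, w⟫ = 0) (hccw : 0 < pdet u w) :
    pdet u w = ‖u‖ * ‖w‖ := by
  have lagrange : pdet u w ^ 2 + ⟪u, w⟫ ^ 2 = ‖u‖ ^ 2 * ‖w‖ ^ 2 := by
    rw [norm_sq_eq_fin_two, norm_sq_eq_fin_two, inner_eq_fin_two, pdet]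
    ring
  rw [hperp] at lagrange
  exact (pow_left_inj₀ hccw.le (by positivity) two_ne_zero).1 (by linear_combination lagrange)

theorem norm_mul_inner_eq_norm_mul_pdet {u w : ℝ²} (hperp : ⟪u, w⟫ = 0)
    (hccw : 0 < pdet u w) (z : ℝ²) : ‖w‖ * ⟪u, z⟫ = ‖u‖ * pdet z w := by
  have hu : 0 < ‖u‖ := norm_pos_iff.2 (ne_zero_of_pdet_pos hccw).1
  have hcross : ⟪u, z⟫ * pdet u w - ⟪u, w⟫ * pdet u z = ‖u‖ ^ 2 * pdet z w := by
    rw [norm_sq_eq_fin_two, inner_eq_fin_two, inner_eq_fin_two, pdet, pdet, pdet]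
    ring
  rw [hperp, pdet_eq_norm_mul_norm hperp hccw] at hcross
  exact mul_left_cancel₀ hu.ne' (by linear_combination hcross)

theorem pdet_sub_pdet_eq_of_perp {u w : ℝ²} (hperp : ⟪u, w⟫ = 0) (hccw : 0 < pdet u w)
    (a b : ℝ²) :
    pdet a w - pdet u b = ‖w‖ * (⟪u, a⟫ / ‖u‖) - ‖u‖ * (⟪w, b⟫ / ‖w‖) := by
  have hu := norm_pos_iff.2 (ne_zero_of_pdet_pos hccw).1
  have hw := norm_pos_iff.2 (ne_zero_of_pdet_pos hccw).2
  have h₁ := norm_mul_inner_eq_norm_mul_pdet hperp hccw a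
  have h₂ := norm_mul_inner_eq_norm_mul_pdet (u := w) (w := -u)
    (by rw [inner_neg_right, real_inner_comm, hperp, neg_zero])
    (by simpa [pdet, mul_comm] using hccw) b
  rw [norm_neg] at h₂
  have hswap : pdet b (-u) = pdet u b := by simp only [pdet, PiLp.neg_apply]; ring
  rw [← mul_div_assoc, h₁, mul_div_cancel_left₀ _ hu.ne', ← mul_div_assoc, h₂, hswap,
    mul_div_cancel_left₀ _ hw.ne']

theorem stmt2_general
    (γ : ℝ → EuclideanSpace ℝ (Fin 2)) (hγ : ContDiff ℝ 1 γ)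
    (hper : ∀ s : ℝ, γ (s + 1) = γ s)
    (s₁ s₂ s₃ s₄ : ℝ → ℝ)
    (I : Set ℝ)
    (hs₁ : ∀ t ∈ I, DifferentiableWithinAt ℝ s₁ I t)
    (hs₂ : ∀ t ∈ I, DifferentiableWithinAt ℝ s₂ I t)
    (hs₃ : ∀ t ∈ I, DifferentiableWithinAt ℝ s₃ I t)
    (hs₄ : ∀ t ∈ I, DifferentiableWithinAt ℝ s₄ I t)
    (hpar : ∀ t ∈ I, γ (s₁ t) + γ (s₃ t) = γ (s₂ t) + γ (s₄ t))
    (hperp : ∀ t ∈ I, inner ℝ (γ (s₂ t) - γ (s₁ t)) (γ (s₄ t) - γ (s₁ t)) = (0 : ℝ))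
    (hccw : ∀ t ∈ I, pdet (γ (s₂ t) - γ (s₁ t)) (γ (s₄ t) - γ (s₁ t)) > 0)
    (X Y : ℝ → ℝ)
    (hX : X = fun t => ‖γ (s₂ t) - γ (s₁ t)‖)
    (hY : Y = fun t => ‖γ (s₃ t) - γ (s₂ t)‖)
    (A₁ A₂ A₃ A₄ : ℝ → ℝ)
    (hA₁ : A₁ = fun t => (1/2) * (∫ s in (s₁ t)..(s₂ t), pdet (γ s) (deriv γ s))
        + (1/2) * pdet (γ (s₂ t)) (γ (s₁ t)))
    (hA₂ : A₂ = fun t => (1/2) * (∫ s in (s₂ t)..(s₃ t), pdet (γ s) (deriv γ s))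
        + (1/2) * pdet (γ (s₃ t)) (γ (s₂ t)))
    (hA₃ : A₃ = fun t => (1/2) * (∫ s in (s₃ t)..(s₄ t), pdet (γ s) (deriv γ s))
        + (1/2) * pdet (γ (s₄ t)) (γ (s₃ t)))
    (hA₄ : A₄ = fun t => (1/2) * (∫ s in (s₄ t)..(s₁ t + 1), pdet (γ s) (deriv γ s))
        + (1/2) * pdet (γ (s₁ t + 1)) (γ (s₄ t)))
    (A : ℝ → ℝ) (hA : A = fun t => (A₁ t + A₃ t) - (A₂ t + A₄ t))
:
    ∀ t ∈ I, HasDerivWithinAt A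
      (Y t * derivWithin X I t - X t * derivWithin Y I t) I t := by
  intro t ht
  by_cases hacc : AccPt t (Filter.principal I)
  swap
  · exact HasFDerivWithinAt.of_not_accPt hacc
  have hU : UniqueDiffWithinAt ℝ I t := hacc.uniqueDiffWithinAt
  have hvel {c : ℝ → ℝ} (hc : ∀ t ∈ I, DifferentiableWithinAt ℝ c I t) :
      HasDerivWithinAt (fun τ => γ (c τ)) (derivWithin c I t • deriv γ (c t)) I t :=
    hγ.hasDerivWithinAt_comp (hc t ht).hasDerivWithinAt
  have hvsum := hU.eq_deriv _ ((hvel hs₁).add (hvel hs₃))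
    (((hvel hs₂).add (hvel hs₄)).congr (fun τ hτ => hpar τ hτ) (hpar t ht))
  have hside : ∀ τ ∈ I, γ (s₃ τ) - γ (s₂ τ) = γ (s₄ τ) - γ (s₁ τ) := fun τ hτ => by
    rw [sub_eq_sub_iff_add_eq_add, add_comm, hpar τ hτ, add_comm]
  obtain ⟨hu, hw⟩ := ne_zero_of_pdet_pos (hccw t ht)
  have hX' := ((hvel hs₂).sub (hvel hs₁)).norm hu
  have hY' := ((hvel hs₄).sub (hvel hs₁)).norm hw
  simp only [Pi.sub_apply, ← hX] at hX' hY'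
  replace hY' : HasDerivWithinAt Y _ I t :=
    hY'.congr (fun τ hτ => by simp only [hY, hside τ hτ]) (by simp only [hY, hside t ht])
  have hA' := hasDerivWithinAt_inscribedArea hγ hper (hs₁ t ht).hasDerivWithinAt
    (hs₂ t ht).hasDerivWithinAt (hs₃ t ht).hasDerivWithinAt (hs₄ t ht).hasDerivWithinAt
  subst hA hA₁ hA₂ hA₃ hA₄
  refine hA'.congr_deriv ?_
  rw [alternating_pdet_sum_eq_of_parallelogram (hpar t ht) hvsum, hX'.derivWithin hU,
    hY'.derivWithin hU]
  simp only [hX, hY, hside t ht]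
  exact pdet_sub_pdet_eq_of_perp (hperp t ht) (hccw t ht) _ _

/-- If `s₁,…,s₄` are differentiable on the interval `I` and trace rectangles
gracing `γ`, then `A` is differentiable on `I` with `A′ = Y X′ − X Y′`. -/
theorem stmt2
    (γ : ℝ → EuclideanSpace ℝ (Fin 2)) (hγ : ContDiff ℝ 1 γ)
    (hper : ∀ s : ℝ, γ (s + 1) = γ s)
    (s₁ s₂ s₃ s₄ : ℝ → ℝ)
    (I : Set ℝ) (hI : I.OrdConnected)
    (hs₁ : ∀ t ∈ I, DifferentiableWithinAt ℝ s₁ I t)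
    (hs₂ : ∀ t ∈ I, DifferentiableWithinAt ℝ s₂ I t)
    (hs₃ : ∀ t ∈ I, DifferentiableWithinAt ℝ s₃ I t)
    (hs₄ : ∀ t ∈ I, DifferentiableWithinAt ℝ s₄ I t)
    (hpar : ∀ t ∈ I, γ (s₁ t) + γ (s₃ t) = γ (s₂ t) + γ (s₄ t))
    (hperp : ∀ t ∈ I, inner ℝ (γ (s₂ t) - γ (s₁ t)) (γ (s₄ t) - γ (s₁ t)) = (0 : ℝ))
    (hccw : ∀ t ∈ I, pdet (γ (s₂ t) - γ (s₁ t)) (γ (s₄ t) - γ (s₁ t)) > 0)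
    (X Y : ℝ → ℝ)
    (hX : X = fun t => ‖γ (s₂ t) - γ (s₁ t)‖)
    (hY : Y = fun t => ‖γ (s₃ t) - γ (s₂ t)‖)
    (A₁ A₂ A₃ A₄ : ℝ → ℝ)
    (hA₁ : A₁ = fun t => (1/2) * (∫ s in (s₁ t)..(s₂ t), pdet (γ s) (deriv γ s))
        + (1/2) * pdet (γ (s₂ t)) (γ (s₁ t)))
    (hA₂ : A₂ = fun t => (1/2) * (∫ s in (s₂ t)..(s₃ t), pdet (γ s) (deriv γ s))
        + (1/2) * pdet (γ (s₃ t)) (γ (s₂ t)))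
    (hA₃ : A₃ = fun t => (1/2) * (∫ s in (s₃ t)..(s₄ t), pdet (γ s) (deriv γ s))
        + (1/2) * pdet (γ (s₄ t)) (γ (s₃ t)))
    (hA₄ : A₄ = fun t => (1/2) * (∫ s in (s₄ t)..(s₁ t + 1), pdet (γ s) (deriv γ s))
        + (1/2) * pdet (γ (s₁ t + 1)) (γ (s₄ t)))
    (A : ℝ → ℝ) (hA : A = fun t => (A₁ t + A₃ t) - (A₂ t + A₄ t))
:
    ∀ t ∈ I, HasDerivWithinAt A
      (Y t * derivWithin X I t - X t * derivWithin Y I t) I t :=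
  stmt2_general γ hγ hper s₁ s₂ s₃ s₄ I hs₁ hs₂ hs₃ hs₄ hpar hperp hccw X Y hX hY A₁ A₂ A₃ A₄ hA₁
    hA₂ hA₃ hA₄ A hA
end
end

section
/- (Rectangles inscribed in four lines form a conic section.) Let a₁, a₂, a₃, a₄, b₁, b₂, b₃, b₄ ∈ ℝ and let L_j = {(x, a_j·x + b_j) : x ∈ ℝ} ⊆ ℝ² be the corresponding non-vertical lines. For (x₁, x₂, x₃) ∈ ℝ³ set p_j = (x_j, a_j·x_j + b_j) for j = 1, 2, 3 and p₄ = p₁ + p₃ − p₂ (so p₁, p₂, p₃, p₄ is a parallelogram). Then the set Γ′ = {(x₁, x₂, x₃) ∈ ℝ³ : p₄ ∈ L₄ and ⟨p₁ − p₂, p₃ − p₂⟩ = 0}, which parametrizes the labeled (possibly degenerate) rectangles with j-th vertex on L_j, equals ℓ⁻¹(0) ∩ q⁻¹(0), where ℓ : ℝ³ → ℝ is the affine function ℓ(x₁, x₂, x₃) = (a₁ − a₄)x₁ − (a₂ − a₄)x₂ + (a₃ − a₄)x₃ + (b₁ − b₂ + b₃ − b₄) and q : ℝ³ → ℝ is a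 polynomial function of total degree at most 2. Moreover, if a₁, a₂, a₃, a₄ are not all equal, then ℓ is a nonconstant affine function, so ℓ⁻¹(0) is an affine plane in ℝ³. -/
/-!
Since `p₄ = p₁ + p₃ - p₂` depends affinely on `(x₁, x₂, x₃)`, the condition `p₄ ∈ L₄` is the
single affine equation `ℓ = 0`. The right-angle condition `⟨p₁ - p₂, p₃ - p₂⟩ = 0` pairs two
vectors whose coordinates are affine in `(x₁, x₂, x₃)`, so it is a quadratic equation `q = 0`.
Evaluating `ℓ` at the unit vectors and at `0` recovers the coefficients `a_j - a₄`.
-/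

open MvPolynomial

section TotalDegree

variable {R σ : Type*}

lemma totalDegree_C_mul_X_add_C_le [CommSemiring R] (a b : R) (i : σ) :
    (C a * X i + C b).totalDegree ≤ 1 := by
  refine (totalDegree_add _ _).trans (max_le ((totalDegree_mul _ _).trans ?_) ?_)
  · rw [totalDegree_C, zero_add]
    exact (totalDegree_monomial_le _ _).trans (by simp)
  · simp [totalDegree_C]

lemma totalDegree_mul_add_mul_le [CommSemiring R] {f₁ f₂ g₁ g₂ : MvPolynomial σ R}
    (hf₁ : f₁.totalDegree ≤ 1) (hf₂ : f₂.totalDegree ≤ 1)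
    (hg₁ : g₁.totalDegree ≤ 1) (hg₂ : g₂.totalDegree ≤ 1) :
    (f₁ * g₁ + f₂ * g₂).totalDegree ≤ 2 :=
  (totalDegree_add _ _).trans <| max_le
    ((totalDegree_mul _ _).trans (add_le_add hf₁ hg₁))
    ((totalDegree_mul _ _).trans (add_le_add hf₂ hg₂))

lemma totalDegree_sub_le_of_le [CommRing R] {p q : MvPolynomial σ R} {n : ℕ}
    (hp : p.totalDegree ≤ n) (hq : q.totalDegree ≤ n) : (p - q).totalDegree ≤ n :=
  (totalDegree_sub p q).trans (max_le hp hq)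

lemma totalDegree_X_sub_X_le [CommRing R] (i j : σ) :
    (X i - X j : MvPolynomial σ R).totalDegree ≤ 1 :=
  totalDegree_sub_le_of_le ((totalDegree_monomial_le _ _).trans (by simp))
    ((totalDegree_monomial_le _ _).trans (by simp))

end TotalDegree

/-- `⟨p₁ - p₂, p₃ - p₂⟩` for `p_j = (x_j, a_j x_j + b_j)`, with `x_j` the variable `X (j - 1)`. -/
noncomputable def rectangleQuadric {R : Type*} [CommRing R] (a₁ a₂ a₃ b₁ b₂ b₃ : R) :
    MvPolynomial (Fin 3) R :=
  (X 0 - X 1) * (X 2 - X 1) +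
    (C a₁ * X 0 + C b₁ - (C a₂ * X 1 + C b₂)) * (C a₃ * X 2 + C b₃ - (C a₂ * X 1 + C b₂))

section RectangleQuadric

variable {R : Type*} [CommRing R] (a₁ a₂ a₃ b₁ b₂ b₃ : R)

lemma totalDegree_rectangleQuadric_le : (rectangleQuadric a₁ a₂ a₃ b₁ b₂ b₃).totalDegree ≤ 2 :=
  totalDegree_mul_add_mul_le (totalDegree_X_sub_X_le _ _)
    (totalDegree_sub_le_of_le (totalDegree_C_mul_X_add_C_le _ _ _)
      (totalDegree_C_mul_X_add_C_le _ _ _))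
    (totalDegree_X_sub_X_le _ _)
    (totalDegree_sub_le_of_le (totalDegree_C_mul_X_add_C_le _ _ _)
      (totalDegree_C_mul_X_add_C_le _ _ _))

lemma eval_rectangleQuadric (x₁ x₂ x₃ : R) :
    eval ![x₁, x₂, x₃] (rectangleQuadric a₁ a₂ a₃ b₁ b₂ b₃) =
      (x₁ - x₂) * (x₃ - x₂) +
        (a₁ * x₁ + b₁ - (a₂ * x₂ + b₂)) * (a₃ * x₃ + b₃ - (a₂ * x₂ + b₂)) := by
  simp [rectangleQuadric]

end RectangleQuadric

/-- Rectangles inscribed in four non-vertical lines `L_j = {(x, a_j x + b_j)}`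
form a conic section: the set `Γ′ ⊆ ℝ³` parametrizing labeled (possibly
degenerate) rectangles with `j`-th vertex on `L_j` equals
`ℓ⁻¹(0) ∩ q⁻¹(0)` where `ℓ` is the explicit affine function
`ℓ(x₁,x₂,x₃) = (a₁−a₄)x₁ − (a₂−a₄)x₂ + (a₃−a₄)x₃ + (b₁−b₂+b₃−b₄)` and `q` is a
polynomial of total degree at most `2`.  Moreover, if `a₁, a₂, a₃, a₄` are not
all equal, then `ℓ` is nonconstant. -/
theorem stmt12 (a₁ a₂ a₃ a₄ b₁ b₂ b₃ b₄ : ℝ)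
    (L₄ : Set (ℝ × ℝ)) (hL₄ : L₄ = {y : ℝ × ℝ | ∃ x : ℝ, y = (x, a₄ * x + b₄)})
    (p₁ p₂ p₃ p₄ : ℝ → ℝ → ℝ → ℝ × ℝ)
    (hp₁ : ∀ x₁ x₂ x₃ : ℝ, p₁ x₁ x₂ x₃ = (x₁, a₁ * x₁ + b₁))
    (hp₂ : ∀ x₁ x₂ x₃ : ℝ, p₂ x₁ x₂ x₃ = (x₂, a₂ * x₂ + b₂))
    (hp₃ : ∀ x₁ x₂ x₃ : ℝ, p₃ x₁ x₂ x₃ = (x₃, a₃ * x₃ + b₃))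
    (hp₄ : ∀ x₁ x₂ x₃ : ℝ, p₄ x₁ x₂ x₃ = p₁ x₁ x₂ x₃ + p₃ x₁ x₂ x₃ - p₂ x₁ x₂ x₃)
    (Γ' : Set (ℝ × ℝ × ℝ))
    (hΓ' : Γ' = {v : ℝ × ℝ × ℝ | p₄ v.1 v.2.1 v.2.2 ∈ L₄ ∧
      (p₁ v.1 v.2.1 v.2.2 - p₂ v.1 v.2.1 v.2.2).1
        * (p₃ v.1 v.2.1 v.2.2 - p₂ v.1 v.2.1 v.2.2).1
      + (p₁ v.1 v.2.1 v.2.2 - p₂ v.1 v.2.1 v.2.2).2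
        * (p₃ v.1 v.2.1 v.2.2 - p₂ v.1 v.2.1 v.2.2).2 = 0})
    (ℓ : ℝ × ℝ × ℝ → ℝ)
    (hℓ : ℓ = fun v => (a₁ - a₄) * v.1 - (a₂ - a₄) * v.2.1 + (a₃ - a₄) * v.2.2
      + (b₁ - b₂ + b₃ - b₄)) :
    (∃ q : MvPolynomial (Fin 3) ℝ, q.totalDegree ≤ 2 ∧
      Γ' = {v : ℝ × ℝ × ℝ | ℓ v = 0} ∩
        {v : ℝ × ℝ × ℝ | MvPolynomial.eval ![v.1, v.2.1, v.2.2] q = 0}) ∧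
    (¬ (a₁ = a₂ ∧ a₂ = a₃ ∧ a₃ = a₄) → ∃ v w : ℝ × ℝ × ℝ, ℓ v ≠ ℓ w) := by
  subst hL₄ hΓ' hℓ
  refine ⟨⟨rectangleQuadric a₁ a₂ a₃ b₁ b₂ b₃, totalDegree_rectangleQuadric_le .., ?_⟩, ?_⟩
  · ext ⟨x₁, x₂, x₃⟩
    have hp₄_mem : a₁ * x₁ + b₁ + (a₃ * x₃ + b₃) - (a₂ * x₂ + b₂) = a₄ * (x₁ + x₃ - x₂) + b₄ ↔
        (a₁ - a₄) * x₁ - (a₂ - a₄) * x₂ + (a₃ - a₄) * x₃ + (b₁ - b₂ + b₃ - b₄) = 0 := by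
      constructor <;> intro h <;> linarith
    simp only [hp₁, hp₂, hp₃, hp₄, Prod.mk_add_mk, Prod.mk_sub_mk, Prod.mk.injEq, exists_eq_left',
      hp₄_mem, eval_rectangleQuadric, Set.mem_ofPred_eq, Set.mem_inter_iff]
  · intro hne
    by_contra! hconst
    have h₁ := hconst (1, 0, 0) 0
    have h₂ := hconst (0, 1, 0) 0
    have h₃ := hconst (0, 0, 1) 0
    simp only [Prod.fst_zero, Prod.snd_zero, mul_zero, mul_one, sub_zero, add_zero, zero_sub,
      zero_add] at h₁ h₂ h₃
    exact hne ⟨by linarith, by linarith, by linarith⟩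
end
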